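/- For any pointed item e, character a, and string w: w ∈ L_p(move(e,a)) if and only if aw ∈ L_p(e). -/

import Mathlib

/-!
Broadcasting a point through `e` yields a pre whose pointed language is `L(|e|) + L_p(e)`; in the
star case this rests on the Kleene-algebra identity `M L∗ + 1 = L∗ + N L∗`, valid whenever
`M ≤ L + N ≤ M + 1`. Hence the lifted constructors act on pointed languages by
`L_p(p ⊕ q) = L_p(p) + L_p(q)`, `L_p(p ⊙ q) = L_p(p) L(|q|) + L_p(q)` and
`L_p(p^⋆) = L_p(p) L(|p|)∗`. Since no pointed language contains `ε`, the left quotient by `a`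
commutes with these operations, and the theorem follows by induction on `e`.
-/

namespace PointedRE

inductive PItem (α : Type) : Type
  | empty : PItem α
  | eps : PItem α
  | ch : α → PItem α
  | pch : α → PItem α
  | plus : PItem α → PItem α → PItem α
  | cat : PItem α → PItem α → PItem α
  | star : PItem α → PItem α

namespace PItem

variable {α : Type}

/-- The carrier: erase all points. -/
def carrier : PItem α → RegularExpression α
  | empty => 0
  | eps => 1
  | ch a => RegularExpression.char a
  | pch a => RegularExpression.char a
  | plus e1 e2 => carrier e1 + carrier e2
  | cat e1 e2 => carrier e1 * carrier e2
  | star e => (carrier e).star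

/-- ε(b) : {ε} if b, ∅ otherwise. -/
def ebool (b : Bool) : Language α := if b then 1 else 0

/-- The pointed language of a pointed item. -/
def Lp : PItem α → Language α
  | empty => 0
  | eps => 0
  | ch _ => 0
  | pch a => {[a]}
  | plus e1 e2 => Lp e1 + Lp e2
  | cat e1 e2 => Lp e1 * (carrier e2).matches' + Lp e2
  | star e => Lp e * KStar.kstar (carrier e).matches'

/-- A pointed regular expression (pre): a pointed item with a trailing boolean. -/
abbrev Pre (α : Type) := PItem α × Bool

/-- The pointed language of a pre. -/
def LpP (p : Pre α) : Language α := Lp p.1 + ebool p.2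

/-- Broadcasting a point inside a pointed item. -/
def broadcast : PItem α → Pre α
  | empty => (empty, false)
  | eps => (eps, true)
  | ch a => (pch a, false)
  | pch a => (pch a, false)
  | plus e1 e2 =>
      (plus (broadcast e1).1 (broadcast e2).1, (broadcast e1).2 || (broadcast e2).2)
  | cat e1 e2 =>
      if (broadcast e1).2 then
        (cat (broadcast e1).1 (broadcast e2).1, (broadcast e2).2)
      else (cat (broadcast e1).1 e2, false)
  | star e => (star (broadcast e).1, true)

/-- Lifted sum on pres. -/
def oplus (p1 p2 : Pre α) : Pre α := (plus p1.1 p2.1, p1.2 || p2.2)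

/-- Lifted concatenation on pres. -/
def odot (p1 p2 : Pre α) : Pre α :=
  if p1.2 then (cat p1.1 (broadcast p2.1).1, p2.2 || (broadcast p2.1).2)
  else (cat p1.1 p2.1, p2.2)

/-- Lifted Kleene star on pres. -/
def ostar (p : Pre α) : Pre α :=
  if p.2 then (star (broadcast p.1).1, true) else (star p.1, false)

/-- Broadcasting extended to pres. -/
def broadcastP (p : Pre α) : Pre α :=
  ((broadcast p.1).1, p.2 || (broadcast p.1).2)

/-- The move operation on pointed items. -/
def move [DecidableEq α] (a : α) : PItem α → Pre α
  | empty => (empty, false)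
  | eps => (eps, false)
  | ch b => (ch b, false)
  | pch b => if b = a then (ch b, true) else (ch b, false)
  | plus e1 e2 => oplus (move a e1) (move a e2)
  | cat e1 e2 => odot (move a e1) (move a e2)
  | star e => ostar (move a e)

/-- The move operation iterated along a string (on pres, ignoring the trailing point). -/
def moves [DecidableEq α] : Pre α → List α → Pre α
  | p, [] => p
  | p, a :: w => moves (move a p.1) w

/-- Embedding of regular expressions as point-free pointed items. -/
def embed : RegularExpression α → PItem α
  | .zero => empty
  | .epsilon => eps
  | .char a => ch a
  | .plus e1 e2 => plus (embed e1) (embed e2)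
  | .comp e1 e2 => cat (embed e1) (embed e2)
  | .star e => star (embed e)

/-- Read-back of a pointed item as a set of regular expressions. -/
def R : PItem α → Set (RegularExpression α)
  | empty => ∅
  | eps => ∅
  | ch _ => ∅
  | pch a => {RegularExpression.char a}
  | plus e1 e2 => R e1 ∪ R e2
  | cat e1 e2 => (fun r => r * carrier e2) '' R e1 ∪ R e2
  | star e => (fun r => r * (carrier e).star) '' R e

/-- Read-back of a pre. -/
def RP (p : Pre α) : Set (RegularExpression α) :=
  R p.1 ∪ (if p.2 then {1} else ∅)

/-- The language of a set of regular expressions. -/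
def LS (S : Set (RegularExpression α)) : Language α :=
  {w | ∃ r ∈ S, w ∈ r.matches'}

/-- The look-ahead normal form of a regular expression (without ε). -/
def nf : RegularExpression α → Set (RegularExpression α)
  | .zero => ∅
  | .epsilon => ∅
  | .char a => {RegularExpression.char a}
  | .plus e1 e2 => nf e1 ∪ nf e2
  | .comp e1 e2 =>
      if e1.matchEpsilon then (fun r => r * e2) '' nf e1 ∪ nf e2
      else (fun r => r * e2) '' nf e1
  | .star e => (fun r => r * e.star) '' nf e

/-- The look-ahead normal form with ε added when the expression is nullable. -/
def nfe (e : RegularExpression α) : Set (RegularExpression α) :=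
  nf e ∪ (if e.matchEpsilon then {1} else ∅)

/-- nf_ε lifted to sets of regular expressions. -/
def nfeS (S : Set (RegularExpression α)) : Set (RegularExpression α) :=
  ⋃ r ∈ S, nfe r

/-- Merge of two pointed items (meaningful when they share the same carrier). -/
def merge : PItem α → PItem α → PItem α
  | ch a, pch _ => pch a
  | plus e1 e2, plus f1 f2 => plus (merge e1 f1) (merge e2 f2)
  | cat e1 e2, cat f1 f2 => cat (merge e1 f1) (merge e2 f2)
  | star e, star f => star (merge e f)
  | e, _ => e

/-- Merge extended to pres. -/
def mergeP (p q : Pre α) : Pre α := (merge p.1 q.1, p.2 || q.2)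

end PItem
end PointedRE

open Computability

theorem Language.mem_mul_iff_cons_mem_mul {α : Type} {P P' Q : Language α} {a : α}
    (hP : [] ∉ P) (hP' : ∀ u, u ∈ P' ↔ a :: u ∈ P) (w : List α) :
    w ∈ P' * Q ↔ a :: w ∈ P * Q := by
  simp only [Language.mem_mul, hP']
  constructor
  · rintro ⟨u, hu, v, hv, rfl⟩
    exact ⟨a :: u, hu, v, hv, rfl⟩
  · rintro ⟨_ | ⟨b, u⟩, hu, v, hv, huv⟩
    · exact absurd hu hP
    · obtain ⟨rfl, rfl⟩ := List.cons.inj huv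
      exact ⟨u, hu, v, hv, rfl⟩

theorem mul_kstar_add_one_eq_kstar_add_mul_kstar {K : Type*} [KleeneAlgebra K] {L M N : K}
    (hM : M ≤ L + N) (hLN : L + N ≤ M + 1) : M * L∗ + 1 = L∗ + N * L∗ := by
  have hL : L ≤ M + 1 := le_trans le_self_add hLN
  have hN : N ≤ M + 1 := le_trans le_add_self hLN
  have hM_le : M ≤ M * L∗ := calc
    M = M * 1 := (mul_one M).symm
    _ ≤ M * L∗ := by gcongr; exact one_le_kstar
  have hkstar : L∗ ≤ M * L∗ + 1 := by
    refine kstar_le_of_mul_le_left le_add_self ?_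
    calc (M * L∗ + 1) * L = M * (L∗ * L) + L := by rw [add_mul, one_mul, mul_assoc]
      _ ≤ M * L∗ + (M + 1) := by gcongr; exact kstar_mul_le_kstar
      _ ≤ M * L∗ + 1 := by rw [← add_assoc]; exact add_le_add (add_le le_rfl hM_le) le_rfl
  apply le_antisymm
  · calc M * L∗ + 1 ≤ (L + N) * L∗ + L∗ := by gcongr; exact one_le_kstar
      _ = L∗ + N * L∗ := by
        rw [add_mul, add_right_comm, add_eq_right_iff_le.2 mul_kstar_le_kstar]
  · calc L∗ + N * L∗ ≤ L∗ + (M + 1) * L∗ := by gcongr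
      _ = M * L∗ + L∗ := by rw [add_mul, one_mul, add_left_comm, add_idem, add_comm]
      _ ≤ M * L∗ + 1 := by rw [add_le_iff]; exact ⟨le_self_add, hkstar⟩

namespace PointedRE.PItem

variable {α : Type}

@[simp] theorem ebool_false : (ebool false : Language α) = 0 := rfl

@[simp] theorem ebool_true : (ebool true : Language α) = 1 := rfl

theorem ebool_or (b c : Bool) : (ebool (b || c) : Language α) = ebool b + ebool c := by
  cases b <;> cases c <;> simp

theorem ebool_le_one (b : Bool) : (ebool b : Language α) ≤ 1 := by
  cases b <;> simp

@[simp]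
theorem carrier_broadcast_fst (e : PItem α) : carrier (broadcast e).1 = carrier e := by
  induction e with
  | plus e1 e2 ih1 ih2 => simp [broadcast, carrier, ih1, ih2]
  | cat e1 e2 ih1 ih2 => by_cases h : (broadcast e1).2 <;> simp [broadcast, h, carrier, ih1, ih2]
  | star e ih => simp [broadcast, carrier, ih]
  | _ => rfl

@[simp]
theorem carrier_move_fst [DecidableEq α] (a : α) (e : PItem α) :
    carrier (move a e).1 = carrier e := by
  induction e with
  | pch b => by_cases h : b = a <;> simp [move, h, carrier]
  | plus e1 e2 ih1 ih2 => simp [move, oplus, carrier, ih1, ih2]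
  | cat e1 e2 ih1 ih2 => by_cases h : (move a e1).2 <;> simp [move, odot, h, carrier, ih1, ih2]
  | star e ih => by_cases h : (move a e).2 <;> simp [move, ostar, h, carrier, ih]
  | _ => rfl

theorem mem_Lp_pch {a : α} {w : List α} : w ∈ Lp (pch a) ↔ w = [a] := Iff.rfl

theorem nil_not_mem_Lp (e : PItem α) : [] ∉ Lp e := by
  induction e with
  | pch a => simp [mem_Lp_pch]
  | plus e1 e2 ih1 ih2 => rw [Lp, Language.mem_add]; tauto
  | cat e1 e2 ih1 ih2 => rw [Lp, Language.mem_add]; simp [Language.mem_mul, ih1, ih2]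
  | star e ih => rw [Lp]; simp [Language.mem_mul, ih]
  | _ => simp [Lp]

theorem LpP_oplus (p q : Pre α) : LpP (oplus p q) = LpP p + LpP q := by
  simp only [LpP, oplus, Lp, ebool_or, add_add_add_comm]

theorem LpP_odot_of_LpP_broadcast (p q : Pre α)
    (hq : LpP (broadcast q.1) = (carrier q.1).matches' + Lp q.1) :
    LpP (odot p q) = LpP p * (carrier q.1).matches' + LpP q := by
  simp only [LpP] at hq
  cases h : p.2
  · simp only [LpP, odot, h, Bool.false_eq_true, if_false, Lp, ebool_false, add_zero, add_assoc]
  · simp only [LpP, odot, h, if_true, Lp, ebool_or, carrier_broadcast_fst, ebool_true]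
    calc Lp p.1 * (carrier q.1).matches' + Lp (broadcast q.1).1
          + (ebool q.2 + ebool (broadcast q.1).2)
        = Lp p.1 * (carrier q.1).matches'
          + (Lp (broadcast q.1).1 + ebool (broadcast q.1).2) + ebool q.2 := by abel
      _ = (Lp p.1 + 1) * (carrier q.1).matches' + (Lp q.1 + ebool q.2) := by
        rw [hq, add_mul, one_mul]; abel

theorem broadcast_cat (e1 e2 : PItem α) :
    broadcast (cat e1 e2) = odot (broadcast e1) (e2, false) := by
  cases h : (broadcast e1).2 <;> simp [broadcast, odot, h]

theorem LpP_broadcast (e : PItem α) : LpP (broadcast e) = (carrier e).matches' + Lp e := by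
  induction e with
  | empty | eps | ch a | pch a => simp [broadcast, LpP, Lp, carrier]
  | plus e1 e2 ih1 ih2 =>
    change LpP (oplus _ _) = _
    rw [LpP_oplus, ih1, ih2, carrier, Lp, RegularExpression.matches'_add, add_add_add_comm]
  | cat e1 e2 ih1 ih2 =>
    rw [broadcast_cat, LpP_odot_of_LpP_broadcast _ _ ih2, ih1]
    simp only [LpP, Lp, carrier, RegularExpression.matches'_mul, ebool_false, add_zero, add_mul,
      add_assoc]
  | star e ih =>
    have hM : Lp (broadcast e).1 ≤ (carrier e).matches' + Lp e := ih ▸ le_self_add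
    have hLN : (carrier e).matches' + Lp e ≤ Lp (broadcast e).1 + 1 :=
      ih ▸ add_le_add le_rfl (ebool_le_one _)
    simp only [LpP, broadcast, Lp, carrier, carrier_broadcast_fst, ebool_true,
      RegularExpression.matches'_star]
    exact mul_kstar_add_one_eq_kstar_add_mul_kstar hM hLN

theorem LpP_ostar (p : Pre α) : LpP (ostar p) = LpP p * (carrier p.1).matches'∗ := by
  cases h : p.2
  · simp only [LpP, ostar, h, Bool.false_eq_true, if_false, Lp, ebool_false, add_zero]
  · have hp : ostar p = broadcast (star p.1) := by simp [ostar, h, broadcast]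
    rw [hp, LpP_broadcast]
    simp only [LpP, Lp, carrier, RegularExpression.matches'_star, h, ebool_true, add_mul, one_mul,
      add_comm]

end PointedRE.PItem

open PointedRE PItem

/-- w ∈ L_p(move(e,a)) iff aw ∈ L_p(e). -/
theorem stmt10 {α : Type} [DecidableEq α] (e : PItem α) (a : α) (w : List α) :
    w ∈ LpP (move a e) ↔ (a :: w) ∈ Lp e := by
  induction e generalizing w with
  | empty | eps | ch b => simp [move, LpP, Lp]
  | pch b =>
    rw [mem_Lp_pch]
    by_cases h : b = a
    · subst h
      simp [move, LpP, Lp]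
    · simp [move, h, LpP, Lp, Ne.symm h]
  | plus e1 e2 ih1 ih2 => rw [move, LpP_oplus, Language.mem_add, ih1, ih2, Lp, Language.mem_add]
  | cat e1 e2 ih1 ih2 =>
    rw [move, LpP_odot_of_LpP_broadcast _ _ (LpP_broadcast _), carrier_move_fst, Lp,
      Language.mem_add, Language.mem_add, ih2,
      Language.mem_mul_iff_cons_mem_mul (nil_not_mem_Lp e1) ih1]
  | star e ih =>
    rw [move, LpP_ostar, carrier_move_fst, Lp,
      Language.mem_mul_iff_cons_mem_mul (nil_not_mem_Lp e) ih]
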